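/- Let b ≥ 2 and r ≥ 1, set m = b·r, and for 1 ≤ i ≤ b let w_i be the word ((i−1)r+1, (i−1)r+2, …, i·r). Then the concatenated word W = w_1^{(b−1,m)} w_2^{(b−1,m)} ⋯ w_b^{(b−1,m)} has no strictly decreasing subsequence of length b; that is, there do not exist positions p_1 < p_2 < ⋯ < p_b with W_{p_1} > W_{p_2} > ⋯ > W_{p_b}. -/

import Mathlib

/-! Write a position of `W = concatShift w b k m` as `p = i * (k * r) + t * r + j` with `t < k`,
`j < r`: the entry there is `i * r + (j + 1) + t * m`. For a fixed level `t` these entries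
increase with `(i, j)` lexicographically, i.e. with `p`. So `W` is a union of `k = b - 1`
increasing subwords, and a strictly decreasing subsequence meets each of them at most once. -/

/-- The `k`-fold `m`-shifted concatenation `u^{(k,m)} = u (u+m) ⋯ (u+(k−1)m)`
of a word `u` (a word is a finite list of natural numbers). -/
def shiftRep (u : List ℕ) (k m : ℕ) : List ℕ :=
  (List.range k).flatMap (fun i => u.map (fun x => x + i * m))

/-- The concatenated word `W_k = w_1^{(k,m)} w_2^{(k,m)} ⋯ w_b^{(k,m)}`, where
the words `w_1, …, w_b` are indexed starting at `1`. -/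
def concatShift (w : ℕ → List ℕ) (b k m : ℕ) : List ℕ :=
  (List.range b).flatMap (fun i => shiftRep (w (i + 1)) k m)

theorem List.flatMap_range_map_range {α : Type*} (n ℓ : ℕ) (g : ℕ → ℕ → α) :
    (List.range n).flatMap (fun i => (List.range ℓ).map (g i)) =
      (List.range (n * ℓ)).map (fun p => g (p / ℓ) (p % ℓ)) := by
  induction n with
  | zero => simp
  | succ n ih =>
    rw [List.range_succ, List.flatMap_append, ih, Nat.succ_mul, List.range_add, List.map_append,
      List.map_map]
    simp only [List.flatMap_cons, List.flatMap_nil, List.append_nil, List.append_cancel_left_eq]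
    refine List.map_congr_left fun j hj => ?_
    have hj : j < ℓ := List.mem_range.1 hj
    have hdiv : (n * ℓ + j) / ℓ = n := Nat.div_eq_of_lt_le (Nat.le_add_right _ _) (by
      rw [Nat.succ_mul]; exact Nat.add_lt_add_left hj _)
    simp [hdiv, Nat.mod_eq_of_lt hj]

theorem shiftRep_map_range (c r k m : ℕ) :
    shiftRep ((List.range r).map (fun j => c + (j + 1))) k m =
      (List.range (k * r)).map (fun s => c + (s % r + 1) + s / r * m) := by
  simp only [shiftRep, List.map_map]
  exact List.flatMap_range_map_range k r (fun t j => c + (j + 1) + t * m)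

def shiftLevel (k r p : ℕ) : ℕ := p % (k * r) / r

def shiftedEntry (k r m p : ℕ) : ℕ :=
  p / (k * r) * r + (p % (k * r) % r + 1) + shiftLevel k r p * m

theorem concatShift_eq_map_range {w : ℕ → List ℕ} {b r : ℕ}
    (hw : ∀ i, 1 ≤ i → i ≤ b → w i = (List.range r).map (fun j => (i - 1) * r + (j + 1)))
    (k m : ℕ) :
    concatShift w b k m = (List.range (b * (k * r))).map (shiftedEntry k r m) := by
  have hblock : ∀ i ∈ List.range b, shiftRep (w (i + 1)) k m =
      (List.range (k * r)).map (fun s => i * r + (s % r + 1) + s / r * m) := fun i hi => by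
    rw [hw (i + 1) le_add_self (List.mem_range.1 hi), Nat.add_sub_cancel, shiftRep_map_range]
  rw [concatShift, List.flatMap_congr hblock, List.flatMap_range_map_range]
  rfl

theorem shiftLevel_lt {n k r p : ℕ} (hp : p < n * (k * r)) : shiftLevel k r p < k := by
  have hkr : 0 < k * r := Nat.pos_of_ne_zero (by rintro h; simp [h] at hp)
  exact Nat.div_lt_of_lt_mul (Nat.mul_comm k r ▸ Nat.mod_lt p hkr)

theorem shiftedEntry_lt_of_shiftLevel_eq {k r m p q : ℕ} (hpq : p < q)
    (h : shiftLevel k r p = shiftLevel k r q) : shiftedEntry k r m p < shiftedEntry k r m q := by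
  unfold shiftedEntry
  rw [h]
  suffices p / (k * r) * r + p % (k * r) % r < q / (k * r) * r + q % (k * r) % r by omega
  rcases (Nat.div_le_div_right (c := k * r) hpq.le).lt_or_eq with hblock | hblock
  · have hr : 0 < r := Nat.pos_of_ne_zero (by rintro rfl; simp at hblock)
    calc p / (k * r) * r + p % (k * r) % r < (p / (k * r) + 1) * r := by
          rw [Nat.succ_mul]; exact Nat.add_lt_add_left (Nat.mod_lt _ hr) _
      _ ≤ q / (k * r) * r := Nat.mul_le_mul_right _ hblock
      _ ≤ _ := Nat.le_add_right _ _
  · have hs : p % (k * r) < q % (k * r) := by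
      have hp := Nat.div_add_mod p (k * r)
      have hq := Nat.div_add_mod q (k * r)
      rw [hblock] at hp
      omega
    have hp := Nat.div_add_mod (p % (k * r)) r
    have hq := Nat.div_add_mod (q % (k * r)) r
    rw [shiftLevel, shiftLevel] at h
    rw [h] at hp
    rw [hblock]
    omega

theorem Fintype.card_le_of_strictAnti_of_monotone_on_fibers {ι α : Type*} [Fintype ι]
    [LinearOrder ι] [Preorder α] {f : ι → α} (hf : StrictAnti f) {k : ℕ} (c : ι → Fin k)
    (hc : ∀ x y, x < y → c x = c y → f x ≤ f y) : Fintype.card ι ≤ k := by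
  simpa using Fintype.card_le_of_injective c fun x y hxy => by
    by_contra hne
    rcases Ne.lt_or_gt hne with h | h
    · exact (hf h).not_ge (hc x y h hxy)
    · exact (hf h).not_ge (hc y x h hxy.symm)

theorem stabatb_general (b r : ℕ) (hb : 2 ≤ b) (m : ℕ)
    (w : ℕ → List ℕ)
    (hw : ∀ i, 1 ≤ i → i ≤ b →
      w i = (List.range r).map (fun j => (i - 1) * r + (j + 1))) :
    ¬ ∃ p : Fin b → ℕ, StrictMono p ∧
        (∀ a, p a < (concatShift w b (b - 1) m).length) ∧
        ∀ a c : Fin b, a < c →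
          (concatShift w b (b - 1) m).getD (p c) 0
            < (concatShift w b (b - 1) m).getD (p a) 0 := by
  rintro ⟨p, hp, hlen, hdec⟩
  simp only [concatShift_eq_map_range hw, List.length_map, List.length_range] at hlen hdec
  have hentry (a : Fin b) :
      ((List.range (b * ((b - 1) * r))).map (shiftedEntry (b - 1) r m)).getD (p a) 0 =
        shiftedEntry (b - 1) r m (p a) := by
    simp [List.getD_eq_getElem?_getD, List.getElem?_range (hlen a)]
  simp only [hentry] at hdec
  have hcard := Fintype.card_le_of_strictAnti_of_monotone_on_fibers
    (f := fun a => shiftedEntry (b - 1) r m (p a)) hdec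
    (fun a => ⟨shiftLevel (b - 1) r (p a), shiftLevel_lt (hlen a)⟩)
    fun x y hxy hc => (shiftedEntry_lt_of_shiftLevel_eq (hp hxy) (Fin.val_eq_of_eq hc)).le
  rw [Fintype.card_fin] at hcard
  omega

/-- Let `b ≥ 2`, `r ≥ 1`, `m = b·r`, and `w_i = ((i−1)r+1, …, i·r)` for
`1 ≤ i ≤ b`.  Then `W = w_1^{(b−1,m)} ⋯ w_b^{(b−1,m)}` has no strictly
decreasing subsequence of length `b`. -/
theorem stabatb (b r : ℕ) (hb : 2 ≤ b) (hr : 1 ≤ r) (m : ℕ) (hm : m = b * r)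
    (w : ℕ → List ℕ)
    (hw : ∀ i, 1 ≤ i → i ≤ b →
      w i = (List.range r).map (fun j => (i - 1) * r + (j + 1))) :
    ¬ ∃ p : Fin b → ℕ, StrictMono p ∧
        (∀ a, p a < (concatShift w b (b - 1) m).length) ∧
        ∀ a c : Fin b, a < c →
          (concatShift w b (b - 1) m).getD (p c) 0
            < (concatShift w b (b - 1) m).getD (p a) 0 :=
  stabatb_general b r hb m w hw
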